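/- arXiv:2601.07949 — 8 statements merged into one kernel-verified Lean document; each statement's English description precedes it below -/
import Mathlib

section
/- Let V and W be finite-dimensional complex vector spaces, ħ a nonzero complex number, and (B₁, B₂, I, J) with B₁, B₂ ∈ End(V), I : W → V, J : V → W satisfying [B₁, B₂] + I∘J = ħ·id_V. If S ⊆ V is a subspace invariant under both B₁ and B₂ and contained in ker J, then S = 0. -/
/-- ADHM costability: if `[B₁,B₂] + I∘J = hbar·id` with `hbar ≠ 0`, any subspace `S`
invariant under `B₁` and `B₂` and contained in `ker J` is zero. -/
theorem adhm_costability
    (V W : Type) [AddCommGroup V] [Module ℂ V] [FiniteDimensional ℂ V]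
    [AddCommGroup W] [Module ℂ W] [FiniteDimensional ℂ W]
    (hbar : ℂ) (hhbar : hbar ≠ 0)
    (B₁ B₂ : V →ₗ[ℂ] V) (I : W →ₗ[ℂ] V) (J : V →ₗ[ℂ] W)
    (hADHM : B₁ ∘ₗ B₂ - B₂ ∘ₗ B₁ + I ∘ₗ J = hbar • (LinearMap.id : V →ₗ[ℂ] V))
    (S : Submodule ℂ V)
    (hS1 : ∀ v ∈ S, B₁ v ∈ S) (hS2 : ∀ v ∈ S, B₂ v ∈ S)
    (hSJ : S ≤ LinearMap.ker J) :
    S = ⊥ := by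
  set b₁ : S →ₗ[ℂ] S := B₁.restrict hS1 with hb₁
  set b₂ : S →ₗ[ℂ] S := B₂.restrict hS2 with hb₂
  have key : b₁ ∘ₗ b₂ - b₂ ∘ₗ b₁ = hbar • (LinearMap.id : S →ₗ[ℂ] S) := by
    ext x
    have hJx : J (x : V) = 0 := hSJ x.2
    have := congrFun (congrArg (fun f => f.toFun) hADHM) (x : V)
    simp only [LinearMap.coe_comp, Function.comp_apply, LinearMap.sub_apply,
      LinearMap.add_apply, LinearMap.smul_apply, LinearMap.id_apply] at this ⊢
    simpa [hb₁, hb₂, LinearMap.restrict_apply, hJx] using this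
  have htr := congrArg (LinearMap.trace ℂ S) key
  rw [map_sub, LinearMap.trace_comp_comm', sub_self, map_smul,
    LinearMap.trace_id] at htr
  have hdim : (Module.finrank ℂ S : ℂ) = 0 := by
    have := htr.symm
    rcases smul_eq_zero.mp this with h | h
    · exact absurd h hhbar
    · exact h
  have : Module.finrank ℂ S = 0 := by exact_mod_cast hdim
  exact Submodule.finrank_eq_zero.mp this
end

section
/- Let V and W be finite-dimensional complex vector spaces, ħ a nonzero complex number, and (B₁, B₂, I, J) ADHM data with [B₁, B₂] + I∘J = ħ·id_V. If S ⊆ V is a subspace invariant under both B₁ and B₂ and containing the image of I, then S = V. -/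
/-- ADHM stability: if `[B₁,B₂] + I∘J = hbar·id` with `hbar ≠ 0`, any subspace `S`
invariant under `B₁` and `B₂` and containing `Im I` is all of `V`. -/
theorem adhm_stability
    (V W : Type) [AddCommGroup V] [Module ℂ V] [FiniteDimensional ℂ V]
    [AddCommGroup W] [Module ℂ W] [FiniteDimensional ℂ W]
    (hbar : ℂ) (hhbar : hbar ≠ 0)
    (B₁ B₂ : V →ₗ[ℂ] V) (I : W →ₗ[ℂ] V) (J : V →ₗ[ℂ] W)
    (hADHM : B₁ ∘ₗ B₂ - B₂ ∘ₗ B₁ + I ∘ₗ J = hbar • (LinearMap.id : V →ₗ[ℂ] V))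
    (S : Submodule ℂ V)
    (hS1 : ∀ v ∈ S, B₁ v ∈ S) (hS2 : ∀ v ∈ S, B₂ v ∈ S)
    (hSI : LinearMap.range I ≤ S) :
    S = ⊤ := by
  -- work on the quotient Q = V ⧸ S
  have h1 : S ≤ S.comap B₁ := fun v hv => hS1 v hv
  have h2 : S ≤ S.comap B₂ := fun v hv => hS2 v hv
  set b₁ := Submodule.mapQ S S B₁ h1 with hb₁
  set b₂ := Submodule.mapQ S S B₂ h2 with hb₂
  have hcomm : b₁ ∘ₗ b₂ - b₂ ∘ₗ b₁ =
      hbar • (LinearMap.id : (V ⧸ S) →ₗ[ℂ] (V ⧸ S)) := by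
    refine LinearMap.ext fun x => ?_
    obtain ⟨v, rfl⟩ := S.mkQ_surjective x
    have key := congrArg (fun f => S.mkQ (f v)) hADHM
    simp only [LinearMap.add_apply, LinearMap.comp_apply, LinearMap.smul_apply,
      LinearMap.id_apply, map_add, map_smul] at key
    have hIJ : S.mkQ (I (J v)) = 0 := by
      rw [Submodule.mkQ_apply, Submodule.Quotient.mk_eq_zero]
      exact hSI ⟨J v, rfl⟩
    rw [hIJ, add_zero] at key
    have e1 : b₁ (b₂ (S.mkQ v)) = S.mkQ (B₁ (B₂ v)) := by
      simp [hb₁, hb₂, Submodule.mapQ_apply]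
    have e2 : b₂ (b₁ (S.mkQ v)) = S.mkQ (B₂ (B₁ v)) := by
      simp [hb₁, hb₂, Submodule.mapQ_apply]
    simp only [LinearMap.sub_apply, LinearMap.comp_apply, LinearMap.smul_apply,
      LinearMap.id_apply, e1, e2]
    exact key
  -- take traces
  have htr := congrArg (LinearMap.trace ℂ (V ⧸ S)) hcomm
  rw [map_sub, LinearMap.trace_comp_comm', sub_self, map_smul,
    LinearMap.trace_id] at htr
  have hmul : hbar * (Module.finrank ℂ (V ⧸ S) : ℂ) = 0 := by
    rw [smul_eq_mul] at htr; exact htr.symm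
  have hd0 : Module.finrank ℂ (V ⧸ S) = 0 := by
    rcases mul_eq_zero.mp hmul with h | h
    · exact absurd h hhbar
    · exact_mod_cast h
  have := Submodule.finrank_quotient_add_finrank S
  rw [hd0, zero_add] at this
  exact Submodule.eq_top_of_finrank_eq this
end

section
/- Let V, W be finite-dimensional complex vector spaces, ħ ≠ 0, and (B₁, B₂, I, J) ADHM data with [B₁,B₂] + I∘J = ħ·id_V. Let (e_i) be any basis of W. Then V is spanned by the vectors B₂^m B₁^n I(e_i) for m, n ≥ 0 and all i. -/
/-!
Let `p` be the span of the vectors `B₂^m B₁^n I(e_i)`. It contains `Im I` and is `B₂`-invariant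
by construction, and the moment map equation `B₁B₂ = B₂B₁ + ħ - IJ` shows it is `B₁`-invariant.
On `V ⧸ p` the term `IJ` vanishes, so the induced endomorphisms satisfy `[B₁, B₂] = ħ`; taking
traces gives `ħ · dim (V ⧸ p) = 0`, hence `p = V`.
-/

open Submodule

theorem Module.subsingleton_of_comp_sub_comp_eq_smul_id {K M : Type*} [Field K] [CharZero K]
    [AddCommGroup M] [Module K M] [FiniteDimensional K M] {f g : M →ₗ[K] M} {c : K}
    (hc : c ≠ 0) (h : f ∘ₗ g - g ∘ₗ f = c • LinearMap.id) : Subsingleton M := by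
  have htrace := congrArg (LinearMap.trace K M) h
  rw [map_sub, LinearMap.trace_comp_comm', sub_self, map_smul, LinearMap.trace_id,
    smul_eq_mul, eq_comm, mul_eq_zero] at htrace
  exact Module.finrank_zero_iff.mp (by exact_mod_cast htrace.resolve_left hc)

def orderedMonomialSpan {K V ι : Type*} [Field K] [AddCommGroup V] [Module K V]
    (B₁ B₂ : V →ₗ[K] V) (v : ι → V) : Submodule K V :=
  span K {x | ∃ (m n : ℕ) (i : ι), x = (B₂ ^ m) ((B₁ ^ n) (v i))}

section ADHM

variable {K V W ι : Type*} [Field K] [AddCommGroup V] [Module K V] [AddCommGroup W] [Module K W]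
  {B₁ B₂ : V →ₗ[K] V} {I : W →ₗ[K] V} {J : V →ₗ[K] W} {ħ : K}

theorem apply_apply_eq_of_adhm (h : B₁ ∘ₗ B₂ - B₂ ∘ₗ B₁ + I ∘ₗ J = ħ • LinearMap.id) (x : V) :
    B₁ (B₂ x) = B₂ (B₁ x) + ħ • x - I (J x) := by
  have hx := LinearMap.congr_fun h x
  simp only [LinearMap.add_apply, LinearMap.sub_apply, LinearMap.comp_apply,
    LinearMap.smul_apply, LinearMap.id_apply] at hx
  rw [← hx]
  abel

theorem apply_apply_mem_of_adhm (h : B₁ ∘ₗ B₂ - B₂ ∘ₗ B₁ + I ∘ₗ J = ħ • LinearMap.id)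
    {p : Submodule K V} (hI : LinearMap.range I ≤ p) (hB₂ : p ≤ p.comap B₂) {x : V}
    (hx : x ∈ p) (hB₁x : B₁ x ∈ p) : B₁ (B₂ x) ∈ p := by
  rw [apply_apply_eq_of_adhm h]
  exact sub_mem (add_mem (hB₂ hB₁x) (smul_mem p ħ hx)) (hI (LinearMap.mem_range_self I _))

theorem eq_top_of_adhm [CharZero K] [FiniteDimensional K V] (hħ : ħ ≠ 0)
    (h : B₁ ∘ₗ B₂ - B₂ ∘ₗ B₁ + I ∘ₗ J = ħ • LinearMap.id) {p : Submodule K V}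
    (hI : LinearMap.range I ≤ p) (hB₁ : p ≤ p.comap B₁) (hB₂ : p ≤ p.comap B₂) : p = ⊤ := by
  have hquot : p.mapQ p B₁ hB₁ ∘ₗ p.mapQ p B₂ hB₂ - p.mapQ p B₂ hB₂ ∘ₗ p.mapQ p B₁ hB₁ =
      ħ • LinearMap.id := by
    refine linearMap_qext p (LinearMap.ext fun x => ?_)
    have hIJ : (Submodule.Quotient.mk (I (J x)) : V ⧸ p) = 0 :=
      (Quotient.mk_eq_zero p).mpr (hI (LinearMap.mem_range_self I _))
    simp only [LinearMap.comp_apply, LinearMap.sub_apply, mkQ_apply, mapQ_apply,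
      LinearMap.smul_apply, LinearMap.id_apply, apply_apply_eq_of_adhm h x, Quotient.mk_sub,
      Quotient.mk_add, Quotient.mk_smul, hIJ]
    abel
  exact Submodule.Quotient.subsingleton_iff.mp
    (Module.subsingleton_of_comp_sub_comp_eq_smul_id hħ hquot)

theorem apply_mem_orderedMonomialSpan (B₁ B₂ : V →ₗ[K] V) (v : ι → V) (m n : ℕ) (i : ι) :
    (B₂ ^ m) ((B₁ ^ n) (v i)) ∈ orderedMonomialSpan B₁ B₂ v :=
  subset_span ⟨m, n, i, rfl⟩

theorem orderedMonomialSpan_le_comap_right (v : ι → V) :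
    orderedMonomialSpan B₁ B₂ v ≤ (orderedMonomialSpan B₁ B₂ v).comap B₂ := by
  refine span_le.mpr ?_
  rintro _ ⟨m, n, i, rfl⟩
  simpa only [SetLike.mem_coe, mem_comap, pow_succ', Module.End.mul_apply]
    using apply_mem_orderedMonomialSpan B₁ B₂ v (m + 1) n i

theorem orderedMonomialSpan_le_comap_left (h : B₁ ∘ₗ B₂ - B₂ ∘ₗ B₁ + I ∘ₗ J = ħ • LinearMap.id)
    {v : ι → V} (hI : LinearMap.range I ≤ orderedMonomialSpan B₁ B₂ v) :
    orderedMonomialSpan B₁ B₂ v ≤ (orderedMonomialSpan B₁ B₂ v).comap B₁ := by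
  refine span_le.mpr ?_
  rintro _ ⟨m, n, i, rfl⟩
  induction m with
  | zero =>
    simpa only [SetLike.mem_coe, mem_comap, pow_zero, pow_succ', Module.End.one_apply,
      Module.End.mul_apply]
      using apply_mem_orderedMonomialSpan B₁ B₂ v 0 (n + 1) i
  | succ m ih =>
    rw [pow_succ', Module.End.mul_apply]
    exact apply_apply_mem_of_adhm h hI (orderedMonomialSpan_le_comap_right v)
      (apply_mem_orderedMonomialSpan B₁ B₂ v m n i) ih

theorem range_le_orderedMonomialSpan (b : Module.Basis ι K W) :
    LinearMap.range I ≤ orderedMonomialSpan B₁ B₂ (fun i => I (b i)) := by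
  rw [LinearMap.range_le_iff_comap, eq_top_iff, ← b.span_eq, span_le]
  rintro _ ⟨i, rfl⟩
  simpa only [SetLike.mem_coe, mem_comap, pow_zero, Module.End.one_apply]
    using apply_mem_orderedMonomialSpan B₁ B₂ _ 0 0 i

end ADHM

theorem adhm_stability_basis_general
    (V W : Type) [AddCommGroup V] [Module ℂ V] [FiniteDimensional ℂ V]
    [AddCommGroup W] [Module ℂ W]
    (hbar : ℂ) (hhbar : hbar ≠ 0)
    (B₁ B₂ : V →ₗ[ℂ] V) (I : W →ₗ[ℂ] V) (J : V →ₗ[ℂ] W)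
    (hADHM : B₁ ∘ₗ B₂ - B₂ ∘ₗ B₁ + I ∘ₗ J = hbar • (LinearMap.id : V →ₗ[ℂ] V))
    (ι : Type) (b : Module.Basis ι ℂ W) :
    Submodule.span ℂ {v : V | ∃ (m n : ℕ) (i : ι), v = (B₂ ^ m) ((B₁ ^ n) (I (b i)))} = ⊤ := by
  have hI := range_le_orderedMonomialSpan (I := I) (B₁ := B₁) (B₂ := B₂) b
  exact eq_top_of_adhm hhbar hADHM hI (orderedMonomialSpan_le_comap_left hADHM hI)
    (orderedMonomialSpan_le_comap_right _)

/-- Stability basis lemma: for ADHM data with `hbar ≠ 0` and any basis `(e_i)` of `W`,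
the vectors `B₂^m B₁^n I(e_i)` span `V`. -/
theorem adhm_stability_basis
    (V W : Type) [AddCommGroup V] [Module ℂ V] [FiniteDimensional ℂ V]
    [AddCommGroup W] [Module ℂ W] [FiniteDimensional ℂ W]
    (hbar : ℂ) (hhbar : hbar ≠ 0)
    (B₁ B₂ : V →ₗ[ℂ] V) (I : W →ₗ[ℂ] V) (J : V →ₗ[ℂ] W)
    (hADHM : B₁ ∘ₗ B₂ - B₂ ∘ₗ B₁ + I ∘ₗ J = hbar • (LinearMap.id : V →ₗ[ℂ] V))
    (ι : Type) (b : Module.Basis ι ℂ W) :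
    Submodule.span ℂ {v : V | ∃ (m n : ℕ) (i : ι), v = (B₂ ^ m) ((B₁ ^ n) (I (b i)))} = ⊤ :=
  adhm_stability_basis_general V W hbar hhbar B₁ B₂ I J hADHM ι b
end

section
/- Let V, W be finite-dimensional complex vector spaces, ħ ≠ 0, and (B₁, B₂, I, J) ADHM data with [B₁,B₂] + I∘J = ħ·id_V. Let (e_i) be a basis of W. Then V = Im(B₂) + Span{ B₁^n I(e_i) : n ≥ 0, all i }. -/
/-!
Let `Y ⊆ V` be the largest `B₁`-invariant subspace contained in
`U = Im(B₂) + Span{B₁ⁿ I(eᵢ)}`. It contains `Im(I)`, and the ADHM relation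
`B₁B₂ = B₂B₁ + ħ - IJ` shows that it is also `B₂`-invariant. On `V/Y` the term
`IJ` vanishes, so `[B₁, B₂] = ħ` there; taking traces gives `ħ · dim(V/Y) = 0`,
hence `Y = V` and a fortiori `U = V`.
-/

open Module

variable {K V : Type*} [Field K] [AddCommGroup V] [Module K V]

theorem Module.finrank_eq_zero_of_comm_sub_eq_smul_id [CharZero K] [FiniteDimensional K V]
    {f g : V →ₗ[K] V} {c : K} (hc : c ≠ 0) (h : f ∘ₗ g - g ∘ₗ f = c • LinearMap.id) :
    finrank K V = 0 := by
  have htrace : c * finrank K V = 0 := by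
    simpa [LinearMap.trace_comp_comm' f g] using (congrArg (LinearMap.trace K V) h).symm
  exact_mod_cast (mul_eq_zero.mp htrace).resolve_left hc

theorem Submodule.eq_top_of_comm_sub_smul_mem [CharZero K] [FiniteDimensional K V]
    {Y : Submodule K V} {f g : V →ₗ[K] V} {c : K} (hc : c ≠ 0)
    (hf : Y ≤ Y.comap f) (hg : Y ≤ Y.comap g) (h : ∀ v, f (g v) - g (f v) - c • v ∈ Y) :
    Y = ⊤ := by
  have hquot : Y.mapQ Y f hf ∘ₗ Y.mapQ Y g hg - Y.mapQ Y g hg ∘ₗ Y.mapQ Y f hf =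
      c • LinearMap.id := by
    ext v
    simp only [LinearMap.comp_apply, LinearMap.sub_apply, LinearMap.smul_apply,
      LinearMap.id_apply, Submodule.mkQ_apply, Submodule.mapQ_apply]
    rw [← Submodule.Quotient.mk_sub, ← Submodule.Quotient.mk_smul, Submodule.Quotient.eq]
    exact h v
  have := finrank_zero_iff.mp (finrank_eq_zero_of_comm_sub_eq_smul_id hc hquot)
  exact Submodule.Quotient.subsingleton_iff.mp this

def Submodule.invariantCore (f : V →ₗ[K] V) (U : Submodule K V) : Submodule K V :=
  ⨅ n : ℕ, U.comap (f ^ n)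

namespace Submodule.invariantCore

variable {f g : V →ₗ[K] V} {U : Submodule K V}

theorem mem_iff {v : V} : v ∈ U.invariantCore f ↔ ∀ n : ℕ, (f ^ n) v ∈ U := by
  simp [Submodule.invariantCore, Submodule.mem_iInf]

theorem le_self : U.invariantCore f ≤ U := fun v hv => by
  simpa using mem_iff.mp hv 0

theorem le_comap : U.invariantCore f ≤ (U.invariantCore f).comap f := fun v hv =>
  mem_iff.mpr fun n => by simpa [pow_succ] using mem_iff.mp hv (n + 1)

theorem le_comap_of_comm_sub_smul_mem {c : K} (hg : LinearMap.range g ≤ U)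
    (h : ∀ v, f (g v) - g (f v) - c • v ∈ U.invariantCore f) :
    U.invariantCore f ≤ (U.invariantCore f).comap g := by
  intro v hv
  rw [Submodule.mem_comap, mem_iff]
  intro n
  induction n generalizing v with
  | zero => exact hg (LinearMap.mem_range_self g v)
  | succ n ih =>
    have hsplit : (f ^ (n + 1)) (g v) =
        (f ^ n) (g (f v)) + c • (f ^ n) v + (f ^ n) (f (g v) - g (f v) - c • v) := by
      simp only [pow_succ, Module.End.mul_apply, map_sub, map_smul]
      abel
    rw [hsplit]
    exact U.add_mem (U.add_mem (ih (le_comap hv)) (U.smul_mem c (mem_iff.mp hv n)))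
      (mem_iff.mp (h v) n)

end Submodule.invariantCore

theorem adhm_range_plus_span_general
    (V W : Type) [AddCommGroup V] [Module ℂ V] [FiniteDimensional ℂ V]
    [AddCommGroup W] [Module ℂ W]
    (hbar : ℂ) (hhbar : hbar ≠ 0)
    (B₁ B₂ : V →ₗ[ℂ] V) (I : W →ₗ[ℂ] V) (J : V →ₗ[ℂ] W)
    (hADHM : B₁ ∘ₗ B₂ - B₂ ∘ₗ B₁ + I ∘ₗ J = hbar • (LinearMap.id : V →ₗ[ℂ] V))
    (ι : Type) (b : Module.Basis ι ℂ W) :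
    LinearMap.range B₂ ⊔
      Submodule.span ℂ {v : V | ∃ (n : ℕ) (i : ι), v = (B₁ ^ n) (I (b i))} = ⊤ := by
  set U := LinearMap.range B₂ ⊔
    Submodule.span ℂ {v : V | ∃ (n : ℕ) (i : ι), v = (B₁ ^ n) (I (b i))}
  have hI : ∀ w, I w ∈ U.invariantCore B₁ := by
    intro w
    refine Submodule.invariantCore.mem_iff.mpr fun n => Submodule.mem_sup_right ?_
    have hspan : (Submodule.span ℂ (Set.range b)).map ((B₁ ^ n) ∘ₗ I) ≤
        Submodule.span ℂ {v : V | ∃ (n : ℕ) (i : ι), v = (B₁ ^ n) (I (b i))} :=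
      (Submodule.map_span_le _ _ _).mpr fun _ ⟨i, hi⟩ =>
        Submodule.subset_span ⟨n, i, by simp [hi]⟩
    exact hspan ⟨w, by simp [b.span_eq], rfl⟩
  have hcomm : ∀ v, B₁ (B₂ v) - B₂ (B₁ v) - hbar • v ∈ U.invariantCore B₁ := by
    intro v
    have hv := LinearMap.congr_fun hADHM v
    simp only [LinearMap.add_apply, LinearMap.sub_apply, LinearMap.comp_apply,
      LinearMap.smul_apply, LinearMap.id_apply] at hv
    rw [← hv, sub_add_cancel_left]
    exact Submodule.neg_mem _ (hI (J v))
  have hcore : U.invariantCore B₁ = ⊤ :=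
    Submodule.eq_top_of_comm_sub_smul_mem hhbar Submodule.invariantCore.le_comap
      (Submodule.invariantCore.le_comap_of_comm_sub_smul_mem le_sup_left hcomm) hcomm
  exact top_le_iff.mp (hcore ▸ Submodule.invariantCore.le_self)

/-- For ADHM data with `hbar ≠ 0` and any basis `(e_i)` of `W`,
`V = Im(B₂) + Span{B₁^n I(e_i)}`. -/
theorem adhm_range_plus_span
    (V W : Type) [AddCommGroup V] [Module ℂ V] [FiniteDimensional ℂ V]
    [AddCommGroup W] [Module ℂ W] [FiniteDimensional ℂ W]
    (hbar : ℂ) (hhbar : hbar ≠ 0)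
    (B₁ B₂ : V →ₗ[ℂ] V) (I : W →ₗ[ℂ] V) (J : V →ₗ[ℂ] W)
    (hADHM : B₁ ∘ₗ B₂ - B₂ ∘ₗ B₁ + I ∘ₗ J = hbar • (LinearMap.id : V →ₗ[ℂ] V))
    (ι : Type) (b : Module.Basis ι ℂ W) :
    LinearMap.range B₂ ⊔
      Submodule.span ℂ {v : V | ∃ (n : ℕ) (i : ι), v = (B₁ ^ n) (I (b i))} = ⊤ :=
  adhm_range_plus_span_general V W hbar hhbar B₁ B₂ I J hADHM ι b
end

section
/- Let V, W be finite-dimensional complex vector spaces, ħ ∈ ℂ, u ∈ ℂ, and (B₁, B₂, I, J) ADHM data with [B₁,B₂] + I∘J = ħ·id_V. Suppose ψ₀ ∈ V satisfies B₂B₁ψ₀ = u·ψ₀ and J B₁^k ψ₀ = 0 for all k ≥ 0. Then for all n ≥ 1, B₂ B₁^n ψ₀ = (u − (n−1)ħ) B₁^{n−1} ψ₀. -/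
/-- If `B₂B₁ψ₀ = u·ψ₀` and `J B₁^k ψ₀ = 0` for all `k`, then
`B₂ B₁^n ψ₀ = (u − (n−1)hbar) B₁^{n−1} ψ₀` for all `n ≥ 1`. -/
theorem adhm_commutator_iterate_eigen
    (V W : Type) [AddCommGroup V] [Module ℂ V] [FiniteDimensional ℂ V]
    [AddCommGroup W] [Module ℂ W] [FiniteDimensional ℂ W]
    (hbar u : ℂ)
    (B₁ B₂ : V →ₗ[ℂ] V) (I : W →ₗ[ℂ] V) (J : V →ₗ[ℂ] W)
    (hADHM : B₁ ∘ₗ B₂ - B₂ ∘ₗ B₁ + I ∘ₗ J = hbar • (LinearMap.id : V →ₗ[ℂ] V))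
    (ψ₀ : V) (h0 : B₂ (B₁ ψ₀) = u • ψ₀) (hJ : ∀ k : ℕ, J ((B₁ ^ k) ψ₀) = 0) :
    ∀ n : ℕ, 1 ≤ n →
      B₂ ((B₁ ^ n) ψ₀) = (u - ((n : ℂ) - 1) * hbar) • (B₁ ^ (n - 1)) ψ₀ := by
  have key : ∀ v : V, B₂ (B₁ v) = B₁ (B₂ v) + I (J v) - hbar • v := by
    intro v
    have := congrArg (fun f => f v) hADHM
    simp only [LinearMap.add_apply, LinearMap.sub_apply, LinearMap.comp_apply,
      LinearMap.smul_apply, LinearMap.id_apply] at this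
    linear_combination (norm := abel) -this
  intro n hn
  induction n with
  | zero => omega
  | succ m ih =>
    rcases Nat.eq_or_lt_of_le hn with h1 | h1
    · -- m = 0
      have hm : m = 0 := by omega
      subst hm
      simpa using h0
    · have hm : 1 ≤ m := by omega
      have ihm := ih hm
      have hp : (B₁ ^ (m + 1)) ψ₀ = B₁ ((B₁ ^ m) ψ₀) := by
        rw [pow_succ']; rfl
      have hp2 : (B₁ ^ m) ψ₀ = B₁ ((B₁ ^ (m - 1)) ψ₀) := by
        conv_lhs => rw [show m = (m - 1) + 1 by omega, pow_succ']
        rfl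
      rw [hp, key, ihm, hJ m, Nat.add_sub_cancel]
      rw [hp2]
      push_cast [Nat.cast_sub hm]
      simp only [map_smul]
      rw [← hp2, map_zero]
      module
end

section
/- Let x₁, …, x_N be distinct complex numbers, V a finite-dimensional complex vector space, and B ∈ End(V) such that B − x_j is invertible for all j. Then Σ_{i=1}^{N} (∏_{j ≠ i} (B − x_j)/(x_i − x_j)) · (x_i − B)^{-1} = Σ_{i=1}^{N} (x_i − B)^{-1}. -/
/-!
Write each Lagrange basis polynomial as `Lᵢ = 1 + (X - xᵢ) qᵢ`; then
`Lᵢ(B) (xᵢ - B)⁻¹ = (xᵢ - B)⁻¹ - qᵢ(B)`, so it suffices that `∑ qᵢ = 0`. This polynomial has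
degree `< N` and vanishes at every node `xₖ`: there `qₖ(xₖ) = Lₖ'(xₖ) = ∑_{j ≠ k} (xₖ - xⱼ)⁻¹`,
while `qᵢ(xₖ) = -(xₖ - xᵢ)⁻¹` for `i ≠ k`.
-/

open Polynomial Finset

namespace Polynomial

theorem eval_divByMonic_X_sub_C_self {R : Type*} [CommRing R] (p : R[X]) (a : R) :
    (p /ₘ (X - C a)).eval a = (derivative p).eval a := by
  simpa using congrArg (eval a) (divByMonic_add_X_sub_C_mul_derivative_divByMonic_eq_derivative p a)

theorem eval_divByMonic_X_sub_C_of_ne {F : Type*} [Field F] (p : F[X]) {a b : F} (hba : b ≠ a) :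
    (p /ₘ (X - C a)).eval b = (p.eval b - p.eval a) / (b - a) := by
  have h := congrArg (eval b) (X_sub_C_mul_divByMonic_eq_sub_modByMonic p a)
  rw [modByMonic_X_sub_C_eq_C_eval, eval_mul, eval_sub, eval_sub, eval_X, eval_C, eval_C] at h
  rw [eq_div_iff (sub_ne_zero.mpr hba), ← h, mul_comm]

theorem eval_derivative_prod_of_eval_eq_one {R ι : Type*} [CommRing R] [DecidableEq ι]
    {s : Finset ι} {f : ι → R[X]} {a : R} (hf : ∀ i ∈ s, (f i).eval a = 1) :
    (derivative (∏ i ∈ s, f i)).eval a = ∑ i ∈ s, (derivative (f i)).eval a := by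
  rw [derivative_prod_finset, eval_finsetSum]
  refine sum_congr rfl fun i hi => ?_
  rw [eval_mul, eval_prod, prod_eq_one fun j hj => hf j (mem_of_mem_erase hj), one_mul]

theorem aeval_mul_inverse_smul_one_sub {R A : Type*} [CommRing R] [Ring A] [Algebra R A]
    (p : R[X]) (a : R) {b : A} (hb : IsUnit (a • (1 : A) - b)) :
    aeval b p * Ring.inverse (a • 1 - b) =
      p.eval a • Ring.inverse (a • 1 - b) - aeval b (p /ₘ (X - C a)) := by
  have hp : p = (p /ₘ (X - C a)) * (X - C a) + C (p.eval a) := by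
    rw [mul_comm, ← modByMonic_X_sub_C_eq_C_eval, add_comm, modByMonic_add_div]
  have hX : aeval b (X - C a) = -(a • 1 - b) := by
    rw [map_sub, aeval_X, aeval_C, Algebra.algebraMap_eq_smul_one, neg_sub]
  conv_lhs => rw [hp, map_add, map_mul, hX, aeval_C, Algebra.algebraMap_eq_smul_one]
  rw [add_mul, mul_neg, neg_mul, mul_assoc, Ring.mul_inverse_cancel _ hb, mul_one, smul_mul_assoc,
    one_mul, neg_add_eq_sub]

end Polynomial

namespace Lagrange

variable {F ι : Type*} [Field F] [DecidableEq ι] {s : Finset ι} {v : ι → F}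

theorem derivative_basisDivisor (x y : F) : derivative (basisDivisor x y) = C (x - y)⁻¹ := by
  simp [basisDivisor]

theorem eval_derivative_basis_self (hvs : Set.InjOn v s) {i : ι} (hi : i ∈ s) :
    (derivative (Lagrange.basis s v i)).eval (v i) = ∑ j ∈ s.erase i, (v i - v j)⁻¹ := by
  have hne : ∀ j ∈ s.erase i, v i ≠ v j := fun j hj =>
    fun h => (mem_erase.mp hj).1 (hvs hi (mem_of_mem_erase hj) h).symm
  rw [Lagrange.basis, eval_derivative_prod_of_eval_eq_one
    fun j hj => eval_basisDivisor_left_of_ne (hne j hj)]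
  simp only [derivative_basisDivisor, eval_C]

theorem sum_basis_divByMonic_X_sub_C (hvs : Set.InjOn v s) :
    ∑ i ∈ s, Lagrange.basis s v i /ₘ (X - C (v i)) = 0 := by
  refine eq_zero_of_degree_lt_of_eval_index_eq_zero s hvs ?_ fun k hk => ?_
  · refine (degree_sum_le _ _).trans_lt ((Finset.sup_lt_iff (WithBot.bot_lt_coe _)).mpr ?_)
    intro i hi
    refine (degree_divByMonic_le _ _).trans_lt ?_
    rw [degree_basis hvs hi]
    exact_mod_cast Nat.pred_lt (card_ne_zero_of_mem hi)
  · have hoff : ∀ i ∈ s.erase k, (Lagrange.basis s v i /ₘ (X - C (v i))).eval (v k) =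
        -(v k - v i)⁻¹ := fun i hi => by
      have hik := (mem_erase.mp hi).1
      rw [eval_divByMonic_X_sub_C_of_ne _ (fun h => hik (hvs (mem_of_mem_erase hi) hk h.symm)),
        eval_basis_of_ne hik hk, eval_basis_self hvs (mem_of_mem_erase hi)]
      ring
    rw [eval_finsetSum, ← add_sum_erase _ _ hk, eval_divByMonic_X_sub_C_self,
      eval_derivative_basis_self hvs hk, sum_congr rfl hoff, sum_neg_distrib, add_neg_cancel]

end Lagrange

theorem lagrange_resolvent_sum_general
    (V : Type) [AddCommGroup V] [Module ℂ V]
    (N : ℕ) (x : Fin N → ℂ) (hx : Function.Injective x)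
    (B : Module.End ℂ V)
    (hinv : ∀ j, IsUnit (B - x j • (1 : Module.End ℂ V))) :
    ∑ i : Fin N,
        (Polynomial.aeval B
            (∏ j ∈ Finset.univ.erase i, (C (x i - x j)⁻¹ * (X - C (x j))))) *
          Ring.inverse (x i • (1 : Module.End ℂ V) - B)
      = ∑ i : Fin N, Ring.inverse (x i • (1 : Module.End ℂ V) - B) := by
  have hunit : ∀ i, IsUnit (x i • (1 : Module.End ℂ V) - B) := fun i => by
    simpa only [neg_sub] using (hinv i).neg
  -- the product in the statement unfolds to `Lagrange.basis univ x i`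
  calc ∑ i, aeval B (Lagrange.basis univ x i) * Ring.inverse (x i • 1 - B)
      = ∑ i, (Ring.inverse (x i • 1 - B) -
          aeval B (Lagrange.basis univ x i /ₘ (X - C (x i)))) := by
        refine sum_congr rfl fun i _ => ?_
        rw [aeval_mul_inverse_smul_one_sub _ _ (hunit i),
          Lagrange.eval_basis_self hx.injOn (mem_univ i), one_smul]
    _ = ∑ i, Ring.inverse (x i • (1 : Module.End ℂ V) - B) := by
        rw [sum_sub_distrib, ← map_sum, Lagrange.sum_basis_divByMonic_X_sub_C hx.injOn, map_zero,
          sub_zero]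

/-- Lagrange interpolation identity for resolvents:
`Σᵢ (∏_{j≠i} (B−xⱼ)/(xᵢ−xⱼ)) (xᵢ−B)⁻¹ = Σᵢ (xᵢ−B)⁻¹`. -/
theorem lagrange_resolvent_sum
    (V : Type) [AddCommGroup V] [Module ℂ V] [FiniteDimensional ℂ V]
    (N : ℕ) (hN : 1 ≤ N) (x : Fin N → ℂ) (hx : Function.Injective x)
    (B : Module.End ℂ V)
    (hinv : ∀ j, IsUnit (B - x j • (1 : Module.End ℂ V))) :
    ∑ i : Fin N,
        (Polynomial.aeval B
            (∏ j ∈ Finset.univ.erase i, (C (x i - x j)⁻¹ * (X - C (x j))))) *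
          Ring.inverse (x i • (1 : Module.End ℂ V) - B)
      = ∑ i : Fin N, Ring.inverse (x i • (1 : Module.End ℂ V) - B) :=
  lagrange_resolvent_sum_general V N x hx B hinv
end

section
/- Let ħ, u be complex numbers, V₀ and V₋₁ one-dimensional complex vector spaces, and scalars b₁ (= B_{1,−1} : V₋₁ → V₀), b₂ (= B_{2,0} : V₀ → V₋₁), i₀, j₀, i₋₁, j₋₁ ∈ ℂ satisfying b₁b₂ + i₀j₀ = ħ and −b₂b₁ + i₋₁j₋₁ = ħ. Define the 2×2 matrix S(u) with entries S₁₁ = 1 + j₀i₀/u, S₁₂ = j₋₁b₂i₀/u, S₂₁ = j₀b₁i₋₁/u, S₂₂ = j₋₁b₂b₁i₋₁/u + j₋₁i₋₁ + u + ħ. Then det S(u) = (u+ħ)(u+2ħ)/u for all u ≠ 0. -/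
/-!
The `u⁻²` terms of the determinant cancel, and after the first moment map equation
`b₁b₂ + i₀j₀ = ħ` the rest factors as `(u + ħ)(u + i₀j₀ + i₋₁j₋₁) / u`. Adding the two
moment map equations kills `b₁b₂`, so `i₀j₀ + i₋₁j₋₁ = 2ħ`.
-/

theorem det_a2_scattering_eq {K : Type*} [Field K] {hbar u b1 b2 i0 j0 im1 jm1 : K}
    (hu : u ≠ 0) (h1 : b1 * b2 + i0 * j0 = hbar) :
    Matrix.det
        !![1 + j0 * i0 / u, jm1 * b2 * i0 / u;
           j0 * b1 * im1 / u, jm1 * b2 * b1 * im1 / u + jm1 * im1 + u + hbar]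
      = (u + hbar) * (u + i0 * j0 + im1 * jm1) / u := by
  rw [Matrix.det_fin_two_of]
  field_simp
  linear_combination u * im1 * jm1 * h1

/-- The `A₂` surface example: the monopole scattering matrix extracted from the
instanton one has determinant `(u+ħ)(u+2ħ)/u`. -/
theorem a2_scattering_det
    (hbar u : ℂ) (hu : u ≠ 0)
    (b1 b2 i0 j0 im1 jm1 : ℂ)
    (h1 : b1 * b2 + i0 * j0 = hbar)
    (h2 : -(b2 * b1) + im1 * jm1 = hbar) :
    Matrix.det
        !![1 + j0 * i0 / u, jm1 * b2 * i0 / u;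
           j0 * b1 * im1 / u, jm1 * b2 * b1 * im1 / u + jm1 * im1 + u + hbar]
      = (u + hbar) * (u + 2 * hbar) / u := by
  have trace_moment : i0 * j0 + im1 * jm1 = 2 * hbar := by linear_combination h1 + h2
  rw [det_a2_scattering_eq hu h1, add_assoc u, trace_moment]
end

section
/- Let k ≥ 1, and let p₁,…,p_k and z₁,…,z_k be elements of a commutative ring with the z_i invertible. Define S(u) = M_k(u)⋯M₁(u) where M_i(u) is the 2×2 matrix [[u − p_i, z_i], [−z_i^{-1}, 0]] over the polynomial ring in u. Then: (a) det S(u) = 1; (b) the (1,1) entry Q(u) of S(u) is a monic polynomial of degree k in u with Q(u) = u^k − (Σ_i p_i) u^{k-1} + (Σ_{i<j} p_i p_j − Σ_{i=1}^{k-1} z_{i+1} z_i^{-1}) u^{k-2} + (lower order). -/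
/-!
Only the first column `(Q_n, T_n)` of the partial products `S_n = M_n ⋯ M_1` matters.
Multiplying by `M_{n+1}` gives `T_{n+1} = -z_{n+1}⁻¹ Q_n`, hence the three-term recurrence
`Q_{n+1} = (u - p_{n+1}) Q_n - z_{n+1} z_n⁻¹ Q_{n-1}`: `Q` is a continuant, the characteristic
polynomial of the open Toda Lax matrix. Following the top three coefficients through this
recurrence gives monicity, the degree and the two subleading coefficients. The determinant is `1`
because every factor has determinant `1`.
-/

open Polynomial

/-- The elementary monopole scattering factor `Mᵢ(u) = [[u − pᵢ, zᵢ], [−zᵢ⁻¹, 0]]`. -/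
noncomputable def todaFactor {R : Type} [CommRing R] {K : ℕ}
    (p : Fin K → R) (z : Fin K → Rˣ) (i : Fin K) :
    Matrix (Fin 2) (Fin 2) (Polynomial R) :=
  !![X - C (p i), C ((z i : R));
     -C (((z i)⁻¹ : Rˣ) : R), 0]

/-- The factorized scattering matrix `S(u) = M_K(u) ⋯ M₁(u)`. -/
noncomputable def todaS {R : Type} [CommRing R] {K : ℕ}
    (p : Fin K → R) (z : Fin K → Rˣ) : Matrix (Fin 2) (Fin 2) (Polynomial R) :=
  ((List.ofFn (todaFactor p z)).reverse).prod

section Continuant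

variable {R : Type*} [CommRing R] (a b : ℕ → R)

/-- `det (X - J)` for an `n × n` tridiagonal matrix `J` with diagonal `a 0, …, a (n - 1)` and
`J i (i + 1) * J (i + 1) i = b i`. -/
noncomputable def continuant : ℕ → R[X]
  | 0 => 1
  | 1 => X - C (a 0)
  | n + 2 => (X - C (a (n + 1))) * continuant (n + 1) - C (b n) * continuant n

@[simp] lemma continuant_zero : continuant a b 0 = 1 := rfl

@[simp] lemma continuant_one : continuant a b 1 = X - C (a 0) := rfl

lemma continuant_add_two (n : ℕ) :
    continuant a b (n + 2) =
      (X - C (a (n + 1))) * continuant a b (n + 1) - C (b n) * continuant a b n := rfl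

lemma natDegree_continuant_le (n : ℕ) : (continuant a b n).natDegree ≤ n := by
  induction n using Nat.twoStepInduction with
  | zero => simp
  | one => simpa using natDegree_X_sub_C_le (a 0)
  | more n ih₀ ih₁ =>
    rw [continuant_add_two]
    refine (natDegree_sub_le_of_le (natDegree_mul_le_of_le (natDegree_X_sub_C_le _) ih₁)
      ((natDegree_C_mul_le _ _).trans ih₀)).trans ?_
    omega

lemma coeff_continuant_add_two_succ (n m : ℕ) :
    (continuant a b (n + 2)).coeff (m + 1) =
      (continuant a b (n + 1)).coeff m - a (n + 1) * (continuant a b (n + 1)).coeff (m + 1) -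
        b n * (continuant a b n).coeff (m + 1) := by
  simp [continuant_add_two, sub_mul, coeff_X_mul, coeff_C_mul]

lemma coeff_continuant_self (n : ℕ) : (continuant a b n).coeff n = 1 := by
  induction n using Nat.twoStepInduction with
  | zero => simp
  | one => simp
  | more n _ ih₁ =>
    rw [coeff_continuant_add_two_succ, ih₁,
      (continuant a b (n + 1)).coeff_eq_zero_of_natDegree_lt
        ((natDegree_continuant_le a b (n + 1)).trans_lt (by omega)),
      coeff_eq_zero_of_natDegree_lt ((natDegree_continuant_le a b n).trans_lt (by omega))]
    ring

lemma monic_continuant (n : ℕ) : (continuant a b n).Monic :=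
  monic_of_natDegree_le_of_coeff_eq_one n (natDegree_continuant_le a b n)
    (coeff_continuant_self a b n)

lemma natDegree_continuant [Nontrivial R] (n : ℕ) : (continuant a b n).natDegree = n :=
  natDegree_eq_of_le_of_coeff_ne_zero (natDegree_continuant_le a b n)
    (by simp [coeff_continuant_self])

lemma coeff_continuant_add_one (n : ℕ) :
    (continuant a b (n + 1)).coeff n = -∑ i ∈ Finset.range (n + 1), a i := by
  induction n with
  | zero => simp
  | succ n ih =>
    rw [coeff_continuant_add_two_succ, ih, coeff_continuant_self,
      coeff_eq_zero_of_natDegree_lt ((natDegree_continuant_le a b n).trans_lt (by omega)),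
      Finset.sum_range_succ _ (n + 1)]
    ring

lemma coeff_continuant_add_two (n : ℕ) :
    (continuant a b (n + 2)).coeff n =
      ∑ j ∈ Finset.range (n + 2), ∑ i ∈ Finset.range j, a i * a j -
        ∑ i ∈ Finset.range (n + 1), b i := by
  induction n with
  | zero =>
    simp [continuant_add_two, Finset.sum_range_succ, mul_coeff_zero, mul_comm]
  | succ n ih =>
    rw [coeff_continuant_add_two_succ, ih, coeff_continuant_add_one, coeff_continuant_self,
      Finset.sum_range_succ _ (n + 2), Finset.sum_range_succ b (n + 1), ← Finset.sum_mul]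
    ring

end Continuant

lemma Fin.sum_filter_lt_eq_sum_range {M : Type*} [AddCommMonoid M] (n : ℕ) (f : ℕ → ℕ → M) :
    ∑ ij ∈ Finset.univ.filter (fun ij : Fin n × Fin n => ij.1 < ij.2), f ij.1 ij.2 =
      ∑ j ∈ Finset.range n, ∑ i ∈ Finset.range j, f i j := by
  rw [Finset.sum_filter, Fintype.sum_prod_type_right,
    ← Fin.sum_univ_eq_sum_range (fun j => ∑ i ∈ Finset.range j, f i j)]
  refine Finset.sum_congr rfl fun j _ => ?_
  rw [← Finset.sum_filter, Finset.filter_gt_eq_Iio, ← Nat.Iio_eq_range, ← Fin.map_valEmbedding_Iio,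
    Finset.sum_map]
  rfl

lemma Fin.sum_dite_succ_lt {M : Type*} [AddCommMonoid M] (n : ℕ)
    (f : Fin (n + 1) → Fin (n + 1) → M) :
    ∑ i : Fin (n + 1), (if h : (i : ℕ) + 1 < n + 1 then f ⟨i + 1, h⟩ i else 0) =
      ∑ i : Fin n, f i.succ i.castSucc := by
  rw [Fin.sum_univ_castSucc, dif_neg (by simp), add_zero]
  exact Finset.sum_congr rfl fun i _ => dif_pos (by simp)


section Toda

variable {R : Type} [CommRing R]

lemma det_todaFactor {K : ℕ} (p : Fin K → R) (z : Fin K → Rˣ) (i : Fin K) :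
    (todaFactor p z i).det = 1 := by
  simp [todaFactor, Matrix.det_fin_two_of, ← C_mul]

lemma det_todaS {K : ℕ} (p : Fin K → R) (z : Fin K → Rˣ) : (todaS p z).det = 1 := by
  rw [todaS, ← Matrix.coe_detMonoidHom, map_list_prod]
  refine List.prod_eq_one fun d hd => ?_
  simp only [List.mem_map, List.mem_reverse, List.mem_ofFn] at hd
  obtain ⟨_, ⟨i, rfl⟩, rfl⟩ := hd
  exact det_todaFactor p z i

lemma todaS_succ {K : ℕ} (p : Fin (K + 1) → R) (z : Fin (K + 1) → Rˣ) :
    todaS p z = todaFactor p z (Fin.last K) * todaS (p ∘ Fin.castSucc) (z ∘ Fin.castSucc) := by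
  simp only [todaS, List.ofFn_succ', List.concat_eq_append, List.reverse_append,
    List.reverse_singleton, List.singleton_append, List.prod_cons]
  rfl

lemma todaS_col_zero_eq_continuant (a b : ℕ → R) {K : ℕ} (p : Fin (K + 1) → R)
    (z : Fin (K + 1) → Rˣ) (ha : ∀ i : Fin (K + 1), a i = p i)
    (hb : ∀ i : Fin K, b i = z i.succ * ((z i.castSucc)⁻¹ : Rˣ)) :
    todaS p z 0 0 = continuant a b (K + 1) ∧
      todaS p z 1 0 = -C (((z (Fin.last K))⁻¹ : Rˣ) : R) * continuant a b K := by
  induction K with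
  | zero =>
    simp [todaS, todaFactor, ← ha 0]
  | succ K ih =>
    obtain ⟨h₀₀, h₁₀⟩ := ih (p ∘ Fin.castSucc) (z ∘ Fin.castSucc) (fun i => ha i.castSucc)
      (fun i => hb i.castSucc)
    have ha_last : a (K + 1) = p (Fin.last (K + 1)) := ha (Fin.last (K + 1))
    have hb_last : b K = z (Fin.last (K + 1)) * ((z (Fin.last K).castSucc)⁻¹ : Rˣ) :=
      hb (Fin.last K)
    rw [todaS_succ, Matrix.mul_apply, Matrix.mul_apply, Fin.sum_univ_two, Fin.sum_univ_two,
      h₀₀, h₁₀, continuant_add_two, ha_last, hb_last]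
    simp [todaFactor, sub_eq_add_neg, mul_assoc]

end Toda

/-- Factorized monopole scattering matrix for `K` smooth `U(2)` monopoles:
`det S(u) = 1`, and the `(1,1)` entry `Q(u)` is monic of degree `K` with
subleading coefficients `−Σ pᵢ` and (for `K ≥ 2`)
`Σ_{i<j} pᵢpⱼ − Σ_i z_{i+1} zᵢ⁻¹` (the open Toda Hamiltonian). -/
theorem toda_scattering_factorization
    (R : Type) [CommRing R] [Nontrivial R]
    (K : ℕ) (hK : 1 ≤ K) (p : Fin K → R) (z : Fin K → Rˣ) :
    (todaS p z).det = 1 ∧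
    (todaS p z 0 0).Monic ∧
    (todaS p z 0 0).natDegree = K ∧
    (todaS p z 0 0).coeff (K - 1) = -(∑ i : Fin K, p i) ∧
    (2 ≤ K →
      (todaS p z 0 0).coeff (K - 2) =
        (∑ ij ∈ Finset.univ.filter (fun ij : Fin K × Fin K => ij.1 < ij.2),
            p ij.1 * p ij.2) -
          ∑ i : Fin K,
            (if h : (i : ℕ) + 1 < K then
              ((z ⟨(i : ℕ) + 1, h⟩ : R) * (((z i)⁻¹ : Rˣ) : R)) else 0)) := by
  refine ⟨det_todaS p z, ?_⟩
  obtain ⟨k, rfl⟩ : ∃ k, K = k + 1 := ⟨K - 1, by omega⟩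
  set a : ℕ → R := fun i => if h : i < k + 1 then p ⟨i, h⟩ else 0
  set b : ℕ → R := fun i =>
    if h : i + 1 < k + 1 then z ⟨i + 1, h⟩ * ((z ⟨i, by omega⟩)⁻¹ : Rˣ) else 0
  have ha : ∀ i : Fin (k + 1), a i = p i := fun i => dif_pos i.isLt
  have hb : ∀ i : Fin k, b i = z i.succ * ((z i.castSucc)⁻¹ : Rˣ) :=
    fun i => dif_pos (Nat.succ_lt_succ i.isLt)
  rw [(todaS_col_zero_eq_continuant a b p z ha hb).1]
  refine ⟨monic_continuant a b _, natDegree_continuant a b _, ?_, ?_⟩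
  · rw [Nat.add_sub_cancel, coeff_continuant_add_one, ← Fin.sum_univ_eq_sum_range]
    simp only [ha]
  · intro hk
    obtain ⟨m, rfl⟩ : ∃ m, k = m + 1 := ⟨k - 1, by omega⟩
    rw [show m + 1 + 1 - 2 = m by omega, coeff_continuant_add_two,
      ← Fin.sum_filter_lt_eq_sum_range _ (fun i j => a i * a j), ← Fin.sum_univ_eq_sum_range b]
    congr 1
    · simp only [ha]
    · simp only [hb]
      exact (Fin.sum_dite_succ_lt _ fun j i => (z j : R) * ((z i)⁻¹ : Rˣ)).symm
end
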